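/- arXiv:1610.07852 — 2 statements merged into one kernel-verified Lean document; each statement's English description precedes it below -/
import Mathlib

section
/- Let b be a 2×2 real symmetric positive definite matrix (for the standard inner product) with det b = 1, E the identity, J = [[0,-1],[1,0]], J' = (E+b)⁻¹J(E+b), and B' = -J'(E+b)⁻¹(E-b). Then tr(J'B') = 0. -/
/-!
Since `J' = (E+b)⁻¹ J (E+b)` is a conjugate of `J`, it squares to `-E`, so `J'B'` is the Cayley
transform `(E+b)⁻¹(E-b)`. For any `2 × 2` matrix `A`, `tr (adj(E+A)(E-A)) = 2(1 - det A)`, hence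
the Cayley transform of a matrix of determinant one is traceless.
-/

open Matrix

namespace Matrix

variable {n R : Type*} [Fintype n] [DecidableEq n] [CommRing R]

theorem inv_mul_mul_mul_self_of_mul_self_eq_neg_one {P J : Matrix n n R} (hP : IsUnit P.det)
    (hJ : J * J = -1) : P⁻¹ * J * P * (P⁻¹ * J * P) = -1 :=
  calc P⁻¹ * J * P * (P⁻¹ * J * P) = P⁻¹ * J * (P * P⁻¹) * J * P := by
        simp only [Matrix.mul_assoc]
    _ = P⁻¹ * (J * J) * P := by
        rw [mul_nonsing_inv _ hP]; simp only [Matrix.mul_one, Matrix.mul_assoc]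
    _ = -1 := by rw [hJ, mul_neg_one, Matrix.neg_mul, nonsing_inv_mul _ hP]

theorem trace_adjugate_one_add_mul_one_sub (A : Matrix (Fin 2) (Fin 2) R) :
    (adjugate (1 + A) * (1 - A)).trace = 2 * (1 - A.det) := by
  rw [det_fin_two]
  simp only [adjugate_fin_two, trace_fin_two, mul_apply, Fin.sum_univ_two, of_apply, cons_val',
    cons_val_zero, cons_val_one, cons_val_fin_one, add_apply, sub_apply, one_apply_eq,
    one_apply_ne zero_ne_one, one_apply_ne one_ne_zero]
  ring

theorem trace_inv_one_add_mul_one_sub {A : Matrix (Fin 2) (Fin 2) R} (hA : A.det = 1) :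
    ((1 + A)⁻¹ * (1 - A)).trace = 0 := by
  rw [inv_def, smul_mul, trace_smul, trace_adjugate_one_add_mul_one_sub, hA, sub_self,
    mul_zero, smul_zero]

end Matrix

theorem stmt_9_general (b J J' B' : Matrix (Fin 2) (Fin 2) ℝ)
    (hb : b.PosDef) (hdet : b.det = 1)
    (hJ : J = !![0, -1; 1, 0])
    (hJ' : J' = (1 + b)⁻¹ * J * (1 + b))
    (hB' : B' = -(J' * ((1 + b)⁻¹ * (1 - b)))) :
    (J' * B').trace = 0 := by
  have hunit : IsUnit (1 + b).det := (PosDef.one.add_posSemidef hb.posSemidef).det_pos.ne'.isUnit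
  have hJJ : J * J = -1 := by
    rw [hJ]; ext i j; fin_cases i <;> fin_cases j <;> simp
  have hJ'J' : J' * J' = -1 := hJ' ▸ inv_mul_mul_mul_self_of_mul_self_eq_neg_one hunit hJJ
  rw [hB', Matrix.mul_neg, ← Matrix.mul_assoc, hJ'J', neg_one_mul, neg_neg,
    trace_inv_one_add_mul_one_sub hdet]

theorem stmt_9 (b J J' B' : Matrix (Fin 2) (Fin 2) ℝ)
    (hb : b.PosDef) (hsymm : bᵀ = b) (hdet : b.det = 1)
    (hJ : J = !![0, -1; 1, 0])
    (hJ' : J' = (1 + b)⁻¹ * J * (1 + b))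
    (hB' : B' = -(J' * ((1 + b)⁻¹ * (1 - b)))) :
    (J' * B').trace = 0 :=
  stmt_9_general b J J' B' hb hdet hJ hJ' hB'
end

section
/- Let b be a 2×2 real symmetric positive definite matrix with det b = 1, E the identity, J = [[0,-1],[1,0]], J' = (E+b)⁻¹J(E+b), and B' = -J'(E+b)⁻¹(E-b). Then det(E + J'B') = det(2(E+b)⁻¹) = 4/det(E+b), and consequently -det(E + J'B') = -1 - det(B'). -/
open Matrix

theorem stmt_10 (b J J' B' : Matrix (Fin 2) (Fin 2) ℝ)
    (hb : b.PosDef) (hsymm : bᵀ = b) (hdet : b.det = 1)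
    (hJ : J = !![0, -1; 1, 0])
    (hJ' : J' = (1 + b)⁻¹ * J * (1 + b))
    (hB' : B' = -(J' * ((1 + b)⁻¹ * (1 - b)))) :
    (1 + J' * B').det = ((2 : ℝ) • (1 + b)⁻¹).det ∧
    ((2 : ℝ) • (1 + b)⁻¹).det = 4 / (1 + b).det ∧
    -(1 + J' * B').det = -1 - B'.det := by
  have hpd : (1 + b).PosDef := Matrix.PosDef.one.add hb
  have hd0 : (1 + b).det ≠ 0 := hpd.det_pos.ne'
  have hu : IsUnit (1 + b).det := hd0.isUnit
  have hJJ : J * J = -1 := by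
    ext i j
    fin_cases i <;> fin_cases j <;>
      simp [hJ, Matrix.mul_apply, Fin.sum_univ_two, Matrix.one_apply]
  have hinv : (1 + b) * (1 + b)⁻¹ = 1 := Matrix.mul_nonsing_inv _ hu
  have hJ'B' : J' * B' = (1 + b)⁻¹ * (1 - b) := by
    rw [hB', hJ']
    have : ((1 + b)⁻¹ * J * (1 + b)) * -((1 + b)⁻¹ * J * (1 + b) *
        ((1 + b)⁻¹ * (1 - b))) =
        -((1 + b)⁻¹ * (J * ((1 + b) * (1 + b)⁻¹) * J) * ((1 + b) * (1 + b)⁻¹) * (1 - b)) := by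
      noncomm_ring
    rw [this, hinv]
    simp only [Matrix.mul_one, hJJ, Matrix.mul_neg, Matrix.neg_mul, neg_neg, Matrix.mul_one]
  have key : 1 + J' * B' = (2 : ℝ) • (1 + b)⁻¹ := by
    rw [hJ'B']
    have h1 : (1 : Matrix (Fin 2) (Fin 2) ℝ) = (1 + b)⁻¹ * (1 + b) :=
      (Matrix.nonsing_inv_mul _ hu).symm
    calc (1 : Matrix (Fin 2) (Fin 2) ℝ) + (1 + b)⁻¹ * (1 - b)
        = (1 + b)⁻¹ * ((1 + b) + (1 - b)) := by rw [Matrix.mul_add, ← h1]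
      _ = (1 + b)⁻¹ * ((2 : ℝ) • 1) := by
            congr 1
            rw [two_smul]
            abel
      _ = (2 : ℝ) • (1 + b)⁻¹ := by rw [Matrix.mul_smul, Matrix.mul_one]
  have hdetinv : (1 + b)⁻¹.det = ((1 + b).det)⁻¹ := by
    rw [Matrix.det_nonsing_inv, Ring.inverse_eq_inv']
  have h2 : ((2 : ℝ) • (1 + b)⁻¹).det = 4 / (1 + b).det := by
    rw [Matrix.det_smul, hdetinv, Fintype.card_fin]
    field_simp
    norm_num
  refine ⟨by rw [key], h2, ?_⟩
  have hdetJ : J.det = 1 := by subst hJ; simp [Matrix.det_fin_two]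
  have hdetJ' : J'.det = 1 := by
    rw [hJ', Matrix.det_mul, Matrix.det_mul, hdetJ, hdetinv]
    field_simp
  have hdetB' : B'.det = (1 - b).det / (1 + b).det := by
    rw [hB', Matrix.det_neg, Fintype.card_fin, Matrix.det_mul, Matrix.det_mul, hdetJ', hdetinv]
    field_simp
  have hdet2 : b 0 0 * b 1 1 - b 0 1 * b 1 0 = 1 := by
    rw [Matrix.det_fin_two] at hdet; exact hdet
  have hsum : (1 + b).det + (1 - b).det = 4 := by
    simp only [Matrix.det_fin_two, Matrix.add_apply, Matrix.sub_apply]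
    simp [Matrix.one_apply]
    nlinarith [hdet2]
  have h3 : (1 - b).det = 4 - (1 + b).det := by linarith
  rw [key, h2, hdetB', h3]
  field_simp
  ring
end
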